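/- With φ_T as defined (φ_T(M₁,M₂,n) = -∑ over squarefree d > 1 with all prime factors ≤ n of μ(d)·⌊((M₁ mod d)+(M₂ mod d))/d⌋), for every natural number n ≥ 1: if φ_T(n², 2n, n) ≤ π(2n) - π(n), then π((n+1)²) - π(n²) ≥ 1, i.e., there is a prime strictly between n² and (n+1)². -/

import Mathlib

open ArithmeticFunction Nat Finset
open scoped ArithmeticFunction.Moebius

/-- Index set: squarefree `d > 1` all of whose prime factors are `≤ n`. -/
def sqfSet (n : ℕ) : Finset ℕ :=
  (Finset.range (primorial n + 1)).filter
    (fun d => 1 < d ∧ Squarefree d ∧ ∀ p ∈ d.primeFactors, p ≤ n)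

/-- The transformed Legendre function `φ_T`. -/
def phiT (M₁ M₂ n : ℕ) : ℤ :=
  -∑ d ∈ sqfSet n, μ d * (((M₁ % d + M₂ % d) / d : ℕ) : ℤ)

/-!
Let `Φ(x)` count the `m ∈ (0, x]` with no prime factor `≤ n`. Legendre's identity
`Φ(x) = ∑_{d ∣ n#} μ(d) ⌊x/d⌋` together with
`⌊(a + b)/d⌋ = ⌊a/d⌋ + ⌊b/d⌋ + ⌊(a mod d + b mod d)/d⌋` gives
`Φ(n² + 2n) = Φ(n²) + Φ(2n) - φ_T(n², 2n, n)`. As `2n < (n + 1)²`, the numbers counted by `Φ(2n)`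
are `1` and the primes in `(n, 2n]`, so `Φ(2n) = π(2n) - π(n) + 1` and the hypothesis forces
`Φ(n² + 2n) > Φ(n²)`. Hence some `m ∈ (n², n² + 2n]` has no prime factor `≤ n`, and since
`m < (n + 1)²` it is prime.
-/

open scoped Nat.Prime

theorem Nat.add_div_eq_add_add_mod_add_mod_div (a b d : ℕ) :
    (a + b) / d = a / d + b / d + (a % d + b % d) / d := by
  rcases Nat.eq_zero_or_pos d with rfl | hd
  · simp
  have hab : a + b = a % d + b % d + d * (a / d + b / d) := by
    nth_rewrite 1 [← Nat.mod_add_div a d, ← Nat.mod_add_div b d]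
    ring
  rw [hab, Nat.add_mul_div_left _ _ hd]
  ring

lemma dvd_primorial_iff {d n : ℕ} :
    d ∣ primorial n ↔ Squarefree d ∧ ∀ p ∈ d.primeFactors, p ≤ n := by
  constructor
  · intro hd
    refine ⟨(squarefree_primorial n).squarefree_of_dvd hd, fun p hp => ?_⟩
    have := Nat.primeFactors_mono hd (primorial_ne_zero n) hp
    rw [primeFactors_primorial] at this
    exact le_of_mem_primesLE this
  · rintro ⟨hsq, hle⟩
    rw [← Nat.prod_primeFactors_of_squarefree hsq, primorial_eq_prod_primesLE]
    exact Finset.prod_dvd_prod_of_subset _ _ _ fun p hp =>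
      mem_primesLE.2 ⟨hle p hp, Nat.prime_of_mem_primeFactors hp⟩

lemma sqfSet_eq_divisors_primorial_erase_one (n : ℕ) :
    sqfSet n = (primorial n).divisors.erase 1 := by
  ext d
  simp only [sqfSet, mem_filter, mem_range, mem_erase, Nat.mem_divisors, dvd_primorial_iff]
  constructor
  · rintro ⟨-, h1, hsq, hle⟩
    exact ⟨by omega, ⟨hsq, hle⟩, primorial_ne_zero n⟩
  · rintro ⟨h1, hdvd, -⟩
    have hd : d ≤ primorial n := Nat.le_of_dvd (primorial_pos n) (dvd_primorial_iff.2 hdvd)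
    have := hdvd.1.ne_zero
    exact ⟨by omega, by omega, hdvd⟩

lemma sum_divisors_primorial_eq_neg_phiT (a b n : ℕ) :
    ∑ d ∈ (primorial n).divisors, μ d * (((a % d + b % d) / d : ℕ) : ℤ) = -phiT a b n := by
  rw [phiT, neg_neg, sqfSet_eq_divisors_primorial_erase_one,
    ← Finset.add_sum_erase _ _ (Nat.one_mem_divisors.2 (primorial_ne_zero n))]
  simp

def coprimeCount (P x : ℕ) : ℕ := #{m ∈ Ioc 0 x | m.Coprime P}

lemma sum_moebius_divisors_filter_dvd {P : ℕ} (hP : P ≠ 0) (m : ℕ) :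
    ∑ d ∈ P.divisors with d ∣ m, (μ d : ℤ) = if m.Coprime P then 1 else 0 := by
  have hdiv : {d ∈ P.divisors | d ∣ m} = (m.gcd P).divisors := by
    rw [← Nat.divisors_filter_dvd_of_dvd hP (Nat.gcd_dvd_right m P)]
    ext d
    simp +contextual [Nat.dvd_gcd_iff]
  rw [hdiv, ← coe_mul_zeta_apply, moebius_mul_coe_zeta, one_apply]

theorem coprimeCount_eq_sum_moebius {P : ℕ} (hP : P ≠ 0) (x : ℕ) :
    (coprimeCount P x : ℤ) = ∑ d ∈ P.divisors, μ d * ((x / d : ℕ) : ℤ) := by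
  calc (coprimeCount P x : ℤ)
      = ∑ m ∈ Ioc 0 x, ∑ d ∈ P.divisors with d ∣ m, (μ d : ℤ) := by
        simp only [coprimeCount, sum_moebius_divisors_filter_dvd hP, sum_boole]
    _ = ∑ d ∈ P.divisors, ∑ m ∈ Ioc 0 x with d ∣ m, (μ d : ℤ) := by
        simp only [sum_filter]
        exact sum_comm
    _ = ∑ d ∈ P.divisors, μ d * ((x / d : ℕ) : ℤ) := by
        simp [Nat.Ioc_filter_dvd_card_eq_div, mul_comm]

theorem coprimeCount_add {P : ℕ} (hP : P ≠ 0) (a b : ℕ) :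
    (coprimeCount P (a + b) : ℤ) = coprimeCount P a + coprimeCount P b
      + ∑ d ∈ P.divisors, μ d * (((a % d + b % d) / d : ℕ) : ℤ) := by
  simp only [coprimeCount_eq_sum_moebius hP, ← sum_add_distrib]
  refine sum_congr rfl fun d _ => ?_
  rw [Nat.add_div_eq_add_add_mod_add_mod_div]
  push_cast
  ring

lemma exists_coprime_of_coprimeCount_lt {P a b : ℕ} (h : coprimeCount P a < coprimeCount P b) :
    ∃ m, a < m ∧ m ≤ b ∧ m.Coprime P := by
  by_contra! hgap
  refine h.not_ge (card_le_card fun m hm => ?_)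
  simp only [mem_filter, mem_Ioc] at hm ⊢
  exact ⟨⟨hm.1.1, not_lt.1 fun ham => hgap m ham hm.1.2 hm.2⟩, hm.2⟩

lemma coprime_primorial_iff {m n : ℕ} :
    m.Coprime (primorial n) ↔ ∀ p, p.Prime → p ∣ m → n < p := by
  refine ⟨fun hc p hp hpm => ?_, fun h => Nat.coprime_of_dvd fun p hp hpm => ?_⟩
  · exact not_le.1 fun hpn => (hp.coprime_iff_not_dvd.1 (hc.coprime_dvd_left hpm))
      (hp.dvd_primorial_iff.2 hpn)
  · exact fun hpP => (h p hp hpm).not_ge (hp.dvd_primorial_iff.1 hpP)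

lemma coprime_primorial_iff_of_lt_sq {m n : ℕ} (h1 : 1 < m) (hm : m < (n + 1) ^ 2) :
    m.Coprime (primorial n) ↔ m.Prime ∧ n < m := by
  refine ⟨fun hc => ?_, fun ⟨hp, hnm⟩ => coprime_primorial_iff.2 fun q hq hqm => ?_⟩
  · have hmin : n < m.minFac :=
      coprime_primorial_iff.1 hc _ (Nat.minFac_prime h1.ne') (Nat.minFac_dvd m)
    have hp : m.Prime := by
      by_contra hnp
      have := Nat.minFac_sq_le_self (by omega) hnp
      have : (n + 1) ^ 2 ≤ m.minFac ^ 2 := Nat.pow_le_pow_left hmin 2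
      omega
    exact ⟨hp, hp.minFac_eq ▸ hmin⟩
  · rwa [(Nat.prime_dvd_prime_iff_eq hq hp).1 hqm]

lemma card_filter_prime_Ioc_add_primeCounting {n x : ℕ} (h : n ≤ x) :
    #{p ∈ Ioc n x | p.Prime} + π n = π x := by
  rw [← primesLE_card_eq_primeCounting, ← primesLE_card_eq_primeCounting,
    primesLE_eq_filter_Ioc_zero, primesLE_eq_filter_Ioc_zero,
    ← Ioc_union_Ioc_eq_Ioc (Nat.zero_le n) h, filter_union,
    card_union_of_disjoint (disjoint_filter_filter (Ioc_disjoint_Ioc_of_le le_rfl)), add_comm]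

lemma coprimeCount_primorial_add_primeCounting {n x : ℕ} (hx : 1 ≤ x) (hnx : n ≤ x)
    (hxn : x < (n + 1) ^ 2) :
    coprimeCount (primorial n) x + π n = π x + 1 := by
  have hset : {m ∈ Ioc 0 x | m.Coprime (primorial n)} = insert 1 {p ∈ Ioc n x | p.Prime} := by
    ext m
    simp only [mem_filter, mem_Ioc, mem_insert]
    rcases lt_trichotomy m 1 with hm | rfl | hm
    · simp [Nat.lt_one_iff.1 hm]
    · simpa using hx
    · by_cases hmx : m ≤ x
      · rw [coprime_primorial_iff_of_lt_sq hm (by omega)]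
        grind
      · grind
  rw [coprimeCount, hset, card_insert_of_notMem (by simp [Nat.not_prime_one]),
    ← card_filter_prime_Ioc_add_primeCounting hnx]
  ring

theorem stmt_4 (n : ℕ) (hn : 1 ≤ n)
    (h : phiT (n ^ 2) (2 * n) n ≤ (Nat.primeCounting (2 * n) : ℤ) - Nat.primeCounting n) :
    ∃ p, p.Prime ∧ n ^ 2 < p ∧ p < (n + 1) ^ 2 := by
  have hsplit := coprimeCount_add (primorial_ne_zero n) (n ^ 2) (2 * n)
  rw [sum_divisors_primorial_eq_neg_phiT] at hsplit
  have hmiddle : (coprimeCount (primorial n) (2 * n) : ℤ) + π n = π (2 * n) + 1 := by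
    exact_mod_cast coprimeCount_primorial_add_primeCounting (n := n) (x := 2 * n)
      (by omega) (by omega) (by nlinarith)
  have hgrowth :
      coprimeCount (primorial n) (n ^ 2) < coprimeCount (primorial n) (n ^ 2 + 2 * n) := by
    zify
    linarith
  obtain ⟨m, hlt, hle, hcop⟩ := exists_coprime_of_coprimeCount_lt hgrowth
  have hm : m < (n + 1) ^ 2 := by nlinarith
  exact ⟨m, ((coprime_primorial_iff_of_lt_sq (by nlinarith) hm).1 hcop).1, hlt, hm⟩
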